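/- Let p, q ≥ 1 and let Ω be a proper domain of Ein^{p,q}. Then Ω is Markowitz-hyperbolic: for all x, y ∈ Ω, if δ^Ω(x,y) = 0 then x = y (so δ^Ω is a distance function on Ω). -/

import Mathlib

noncomputable section

open scoped LinearAlgebra.Projectivization ENNReal
open Projectivization Filter Topology Set

variable {W : Type} [AddCommGroup W] [Module ℝ W] [TopologicalSpace W]

instance projTopology : TopologicalSpace (ℙ ℝ W) :=
  inferInstanceAs (TopologicalSpace (Quotient (projectivizationSetoid ℝ W)))

/-- The null cone in projective space determined by a quadratic form `v ↦ Bf v v`. -/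
def einSet (Bf : W → W → ℝ) : Set (ℙ ℝ W) := {x | Bf x.rep x.rep = 0}

/-- The lightcone of a point of the Einstein universe. -/
def lightcone (Bf : W → W → ℝ) (x : ℙ ℝ W) : Set (ℙ ℝ W) :=
  {y | y ∈ einSet Bf ∧ Bf x.rep y.rep = 0}

/-- A domain: nonempty connected open subset of the Einstein universe
(open and connected in the subspace topology of `einSet Bf`). -/
def IsEinDomain (Bf : W → W → ℝ) (Ω : Set (ℙ ℝ W)) : Prop :=
  Ω ⊆ einSet Bf ∧
  IsOpen (Subtype.val ⁻¹' Ω : Set (einSet Bf)) ∧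
  IsConnected (Subtype.val ⁻¹' Ω : Set (einSet Bf))

/-- A proper domain: some lightcone misses the closure. -/
def IsProperDomain (Bf : W → W → ℝ) (Ω : Set (ℙ ℝ W)) : Prop :=
  IsEinDomain Bf Ω ∧ ∃ x ∈ einSet Bf, closure Ω ∩ lightcone Bf x = ∅

/-- The projective transformation induced by a linear automorphism. -/
def projMap (g : W ≃ₗ[ℝ] W) : ℙ ℝ W → ℙ ℝ W :=
  Projectivization.map (g : W →ₗ[ℝ] W) g.injective

/-- The conformal group of a domain. -/
def Conf (Bf : W → W → ℝ) (Ω : Set (ℙ ℝ W)) : Set (W ≃ₗ[ℝ] W) :=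
  {g | (∀ v, Bf (g v) (g v) = Bf v v) ∧ projMap g '' Ω = Ω}

/-- Quasi-homogeneity of a domain. -/
def IsQuasiHomogeneous (Bf : W → W → ℝ) (Ω : Set (ℙ ℝ W)) : Prop :=
  ∃ K : Set (ℙ ℝ W), K ⊆ Ω ∧ IsCompact K ∧
    Ω = ⋃ g ∈ Conf Bf Ω, projMap g '' K

/-- Dual convexity: every frontier point admits a supporting lightcone. -/
def IsDuallyConvex (Bf : W → W → ℝ) (Ω : Set (ℙ ℝ W)) : Prop :=
  ∀ a ∈ closure Ω \ Ω, ∃ b ∈ einSet Bf, a ∈ lightcone Bf b ∧ lightcone Bf b ∩ Ω = ∅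

/-- The hyperbolic distance on the interval `(-1,1)`. -/
def dHyp (s t : ℝ) : ℝ := |Real.log (((1 + t) * (1 - s)) / ((1 - t) * (1 + s)))|

/-- The interval of parameters. -/
def II : Set ℝ := Set.Ioo (-1 : ℝ) 1

/-- A projectively parametrized lightlike geodesic with values in `Ω`. -/
def IsLightGeodesic (Bf : W → W → ℝ) (Ω : Set (ℙ ℝ W)) (α : ℝ → ℙ ℝ W) : Prop :=
  ∃ (u w : W) (a b c d : ℝ),
    LinearIndependent ℝ ![u, w] ∧
    Bf u u = 0 ∧ Bf u w = 0 ∧ Bf w w = 0 ∧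
    a * d - b * c ≠ 0 ∧
    ∀ t ∈ II, ∃ h : (a * t + b) • u + (c * t + d) • w ≠ 0,
      α t = Projectivization.mk ℝ ((a * t + b) • u + (c * t + d) • w) h ∧ α t ∈ Ω

/-- `IsChainCost Bf Ω x y N c` : there is a chain of index `N` from `x` to `y` in `Ω`
whose cost is `c`. -/
def IsChainCost (Bf : W → W → ℝ) (Ω : Set (ℙ ℝ W)) (x y : ℙ ℝ W) (N : ℕ) (c : ℝ) : Prop :=
  ∃ (xs : Fin (N + 1) → ℙ ℝ W) (αs : Fin N → ℝ → ℙ ℝ W) (ss ts : Fin N → ℝ),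
    xs 0 = x ∧ xs (Fin.last N) = y ∧
    (∀ i : Fin N, IsLightGeodesic Bf Ω (αs i) ∧ ss i ∈ II ∧ ts i ∈ II ∧
      αs i (ss i) = xs i.castSucc ∧ αs i (ts i) = xs i.succ) ∧
    c = ∑ i : Fin N, dHyp (ss i) (ts i)

/-- The Markowitz pseudodistance of `Ω`, with values in `[0,∞]`. -/
def markowitz (Bf : W → W → ℝ) (Ω : Set (ℙ ℝ W)) (x y : ℙ ℝ W) : ℝ≥0∞ :=
  sInf {e | ∃ (N : ℕ) (c : ℝ), 1 ≤ N ∧ IsChainCost Bf Ω x y N c ∧ e = ENNReal.ofReal c}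

/-- The Markowitz pseudodistance restricted to chains of index at most `Nmax`. -/
def markowitzN (Bf : W → W → ℝ) (Ω : Set (ℙ ℝ W)) (Nmax : ℕ) (x y : ℙ ℝ W) : ℝ≥0∞ :=
  sInf {e | ∃ (N : ℕ) (c : ℝ), 1 ≤ N ∧ N ≤ Nmax ∧ IsChainCost Bf Ω x y N c ∧
    e = ENNReal.ofReal c}

/-- The projectivization of a linear subspace. -/
def projSet (Pl : Submodule ℝ W) : Set (ℙ ℝ W) := {y | y.rep ∈ Pl}

/-- A photon subspace: a totally isotropic plane. -/
def IsPhotonSub (Bf : W → W → ℝ) (Pl : Submodule ℝ W) : Prop :=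
  Module.finrank ℝ Pl = 2 ∧ ∀ u ∈ Pl, ∀ w ∈ Pl, Bf u w = 0

/-- Photon-extremal points of the frontier of `Ω`. -/
def IsPhotonExtremal (Bf : W → W → ℝ) (Ω : Set (ℙ ℝ W)) (a : ℙ ℝ W) : Prop :=
  a ∈ closure Ω \ Ω ∧
  ∀ Pl : Submodule ℝ W, IsPhotonSub Bf Pl → a.rep ∈ Pl →
    ¬ ∃ U : Set (ℙ ℝ W), IsOpen U ∧ a ∈ U ∧ U ∩ projSet Pl ⊆ closure Ω

/-- A maximal projectively parametrized lightlike geodesic in `Ω`: its image is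
a connected component of `ℙ(Pl) ∩ Ω`. -/
def IsMaxLightGeodesic (Bf : W → W → ℝ) (Ω : Set (ℙ ℝ W)) (α : ℝ → ℙ ℝ W) : Prop :=
  ∃ (u w : W) (a b c d : ℝ),
    LinearIndependent ℝ ![u, w] ∧
    Bf u u = 0 ∧ Bf u w = 0 ∧ Bf w w = 0 ∧
    a * d - b * c ≠ 0 ∧
    (∀ t ∈ II, ∃ h : (a * t + b) • u + (c * t + d) • w ≠ 0,
      α t = Projectivization.mk ℝ ((a * t + b) • u + (c * t + d) • w) h ∧ α t ∈ Ω) ∧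
    α '' II = connectedComponentIn (projSet (Submodule.span ℝ {u, w}) ∩ Ω) (α 0)

/-- The coordinate bilinear form of signature `(p+1, q+1)` on `ℝⁿ`, `n = p+q+2`. -/
def bForm (p q : ℕ) (v w : Fin (p + q + 2) → ℝ) : ℝ :=
  ∑ i : Fin (p + q + 2), (if (i : ℕ) ≤ p then (-1 : ℝ) else 1) * v i * w i



/-- Core log estimate: `|E₁-E₂|/(E₁+E₂) ≤ |log E₁ - log E₂|`. -/
lemma log_core_aux {E₁ E₂ : ℝ} (h1 : 0 < E₁) (h2 : 0 < E₂) (hle : E₂ ≤ E₁) :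
    (E₁ - E₂) / (E₁ + E₂) ≤ Real.log E₁ - Real.log E₂ := by
  have hlog : Real.log (E₂ / E₁) ≤ E₂ / E₁ - 1 :=
    Real.log_le_sub_one_of_pos (div_pos h2 h1)
  rw [Real.log_div h2.ne' h1.ne'] at hlog
  have h3 : 1 - E₂ / E₁ ≤ Real.log E₁ - Real.log E₂ := by linarith
  have h4 : 1 - E₂ / E₁ = (E₁ - E₂) / E₁ := by field_simp
  have h5 : (E₁ - E₂) / (E₁ + E₂) ≤ (E₁ - E₂) / E₁ :=
    div_le_div_of_nonneg_left (by linarith) h1 (by linarith)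
  linarith
lemma log_core {E₁ E₂ : ℝ} (h1 : 0 < E₁) (h2 : 0 < E₂) :
    |E₁ - E₂| / (E₁ + E₂) ≤ |Real.log E₁ - Real.log E₂| := by
  rcases le_total E₂ E₁ with h | h
  · rw [abs_of_nonneg (by linarith)]
    exact (log_core_aux h1 h2 h).trans (le_abs_self _)
  · rw [abs_of_nonpos (by linarith), abs_sub_comm]
    have := log_core_aux h2 h1 h
    have : Real.log E₂ - Real.log E₁ ≤ |Real.log E₂ - Real.log E₁| := le_abs_self _
    have h' := log_core_aux h2 h1 h
    calc -(E₁ - E₂) / (E₁ + E₂) = (E₂ - E₁) / (E₂ + E₁) := by ring_nf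
    _ ≤ Real.log E₂ - Real.log E₁ := h'
    _ ≤ |Real.log E₂ - Real.log E₁| := le_abs_self _

lemma aux_le1 {k C : ℝ} (h : ∀ E : ℝ, 0 < E → k * E ≤ C) : k ≤ 0 := by
  by_contra hc
  push_neg at hc
  have hC : 0 ≤ C := by
    have := h 1 one_pos; nlinarith [h 1 one_pos]
  have := h ((C + 1) / k) (div_pos (by linarith) hc)
  rw [mul_div_cancel₀ _ hc.ne'] at this
  linarith

lemma aux_le2 {k C : ℝ} (hC : 0 ≤ C) (h : ∀ E : ℝ, 0 < E → k ≤ C * E) : k ≤ 0 := by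
  by_contra hc
  push_neg at hc
  have hE : 0 < k / (2 * (C + 1)) := by positivity
  have := h _ hE
  have h2 : C * (k / (2 * (C + 1))) < k := by
    rw [div_eq_mul_inv]
    have : C * (k * (2 * (C + 1))⁻¹) = (C / (2 * (C+1))) * k := by ring
    rw [this]
    have hlt : C / (2 * (C + 1)) < 1 := by
      rw [div_lt_one (by positivity)]; linarith
    nlinarith
  linarith

lemma key0 (a b g d R : ℝ) (hR : 0 ≤ R) (hg : 0 ≤ g) (hd : 0 ≤ d)
    (h : ∀ E : ℝ, 0 < E → g * E + d ≠ 0 ∧ |a * E + b| ≤ R * |g * E + d|)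
    {E₁ E₂ : ℝ} (h1 : 0 < E₁) (h2 : 0 < E₂) :
    |(a * E₁ + b) / (g * E₁ + d) - (a * E₂ + b) / (g * E₂ + d)|
      ≤ 2 * R * |Real.log E₁ - Real.log E₂| := by
  have hpos : ∀ E : ℝ, 0 < E → 0 < g * E + d := by
    intro E hE
    rcases (h E hE).1.lt_or_gt with hlt | hgt
    · nlinarith [mul_nonneg hg hE.le]
    · exact hgt
  have habs : ∀ E : ℝ, 0 < E → |a * E + b| ≤ R * (g * E + d) := by
    intro E hE
    have := (h E hE).2
    rwa [abs_of_pos (hpos E hE)] at this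
  have ha : |a| ≤ R * g := by
    have := aux_le1 (k := |a| - R * g) (C := R * d + |b|) ?_
    · linarith
    intro E hE
    have h1' := habs E hE
    have h2' : |a| * E - |b| ≤ |a * E + b| := by
      have h3 := abs_add_le (a * E + b) (-b)
      simp only [add_neg_cancel_right] at h3
      have : |a| * E = |a * E| := by rw [abs_mul, abs_of_pos hE]
      rw [this]
      have : |(-b)| = |b| := abs_neg b
      linarith [h3, this.le]
    nlinarith
  have hb : |b| ≤ R * d := by
    have := aux_le2 (k := |b| - R * d) (C := R * g + |a|) (by positivity) ?_
    · linarith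
    intro E hE
    have h1' := habs E hE
    have h2' : |b| - |a| * E ≤ |a * E + b| := by
      have h3 := abs_add_le (a * E + b) (-(a * E))
      simp only [add_neg_cancel_left, add_neg_cancel_comm] at h3
      have h4 : |(-(a * E))| = |a| * E := by rw [abs_neg, abs_mul, abs_of_pos hE]
      linarith [h3, h4.le]
    nlinarith
  -- main computation
  have hd1 : (0:ℝ) < g * E₁ + d := hpos E₁ h1
  have hd2 : (0:ℝ) < g * E₂ + d := hpos E₂ h2
  have hdiff : (a * E₁ + b) / (g * E₁ + d) - (a * E₂ + b) / (g * E₂ + d)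
      = (a * d - b * g) * (E₁ - E₂) / ((g * E₁ + d) * (g * E₂ + d)) := by
    rw [div_sub_div _ _ hd1.ne' hd2.ne']
    ring
  rw [hdiff, abs_div, abs_mul]
  rw [abs_of_pos (mul_pos hd1 hd2)]
  have hnum : |a * d - b * g| ≤ 2 * R * (g * d) := by
    have := abs_sub (a * d) (b * g)
    have h5 : |a * d| = |a| * d := by rw [abs_mul, abs_of_nonneg hd]
    have h6 : |b * g| = |b| * g := by rw [abs_mul, abs_of_nonneg hg]
    have h7 : |a * d - b * g| ≤ |a * d| + |b * g| := abs_sub _ _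
    nlinarith [mul_le_mul_of_nonneg_right ha hd, mul_le_mul_of_nonneg_right hb hg]
  have hden : g * d * (E₁ + E₂) ≤ (g * E₁ + d) * (g * E₂ + d) := by nlinarith [sq_nonneg (g * E₁ - d), sq_nonneg (g * E₂ - d), mul_pos h1 h2, sq_nonneg g, sq_nonneg d, mul_nonneg (mul_nonneg hg hg) (mul_pos h1 h2).le, sq_nonneg (g*E₁ - g*E₂)]
  rcases eq_or_lt_of_le (mul_nonneg hg hd) with hgd | hgd
  · -- g*d = 0 : numerator vanishes
    have h0 : 2 * R * (g * d) = 0 := by rw [← hgd]; ring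
    have hz : |a * d - b * g| = 0 := le_antisymm (by linarith [hnum]) (abs_nonneg _)
    rw [hz, zero_mul, zero_div]
    positivity
  · have hlc := log_core h1 h2
    have hEp : 0 < E₁ + E₂ := by linarith
    calc |a * d - b * g| * |E₁ - E₂| / ((g * E₁ + d) * (g * E₂ + d))
        ≤ 2 * R * (g * d) * |E₁ - E₂| / ((g * E₁ + d) * (g * E₂ + d)) := by
          gcongr
      _ ≤ 2 * R * (g * d) * |E₁ - E₂| / (g * d * (E₁ + E₂)) := by
          gcongr
      _ = 2 * R * (|E₁ - E₂| / (E₁ + E₂)) := by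
          rw [mul_comm (2 * R) (g * d), mul_assoc (g * d), mul_div_mul_left _ _ hgd.ne']
          ring
      _ ≤ 2 * R * |Real.log E₁ - Real.log E₂| := by
          apply mul_le_mul_of_nonneg_left hlc (by positivity)
lemma key (a b g d R : ℝ) (hR : 0 ≤ R)
    (h : ∀ E : ℝ, 0 < E → g * E + d ≠ 0 ∧ |a * E + b| ≤ R * |g * E + d|)
    {E₁ E₂ : ℝ} (h1 : 0 < E₁) (h2 : 0 < E₂) :
    |(a * E₁ + b) / (g * E₁ + d) - (a * E₂ + b) / (g * E₂ + d)|
      ≤ 2 * R * |Real.log E₁ - Real.log E₂| := by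
  -- the signs of g and d agree
  have hsign : (0 ≤ g ∧ 0 ≤ d) ∨ (g ≤ 0 ∧ d ≤ 0) := by
    rcases le_or_gt 0 g with hg | hg
    · rcases le_or_gt 0 d with hd | hd
      · exact Or.inl ⟨hg, hd⟩
      · rcases eq_or_lt_of_le hg with h0 | hg'
        · exact Or.inr ⟨le_of_eq h0.symm, hd.le⟩
        · exact absurd ((h (-d / g) (div_pos (by linarith) hg')).1)
            (by simp only [ne_eq, not_not]; field_simp; ring)
    · rcases le_or_gt 0 d with hd | hd
      · rcases eq_or_lt_of_le hd with h0 | hd'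
        · exact Or.inr ⟨hg.le, le_of_eq h0.symm⟩
        · exact absurd ((h (d / -g) (div_pos hd' (by linarith))).1)
            (by simp only [ne_eq, not_not]; field_simp;
                rw [div_self (show g ≠ 0 by linarith)]; ring)
      · exact Or.inr ⟨hg.le, hd.le⟩
  rcases hsign with ⟨hg, hd⟩ | ⟨hg, hd⟩
  · exact key0 a b g d R hR hg hd h h1 h2
  · have h' : ∀ E : ℝ, 0 < E → (-g) * E + (-d) ≠ 0 ∧
        |(-a) * E + (-b)| ≤ R * |(-g) * E + (-d)| := by
      intro E hE
      obtain ⟨h1', h2'⟩ := h E hE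
      constructor
      · intro hc; apply h1'; linarith
      · have e1 : (-a) * E + (-b) = -(a * E + b) := by ring
        have e2 : (-g) * E + (-d) = -(g * E + d) := by ring
        rw [e1, e2, abs_neg, abs_neg]
        exact h2'
    have := key0 (-a) (-b) (-g) (-d) R hR (by linarith) (by linarith) h' h1 h2
    have e3 : ∀ E : ℝ, ((-a) * E + (-b)) / ((-g) * E + (-d)) = (a * E + b) / (g * E + d) := by
      intro E
      rw [show (-a) * E + (-b) = -(a * E + b) by ring, show (-g) * E + (-d) = -(g * E + d) by ring,
        neg_div_neg_eq]
    rwa [e3, e3] at this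

lemma one_sub_pos_of_mem {s : ℝ} (hs : s ∈ II) : 0 < 1 - s := by
  have := hs.2; linarith [hs.1, hs.2]

lemma one_add_pos_of_mem {s : ℝ} (hs : s ∈ II) : 0 < 1 + s := by
  have := hs.1; linarith

lemma dHyp_eq_log {s t : ℝ} (hs : s ∈ II) (ht : t ∈ II) :
    dHyp s t = |Real.log ((1 + t) / (1 - t)) - Real.log ((1 + s) / (1 - s))| := by
  have h1 := one_sub_pos_of_mem hs
  have h2 := one_add_pos_of_mem hs
  have h3 := one_sub_pos_of_mem ht
  have h4 := one_add_pos_of_mem ht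
  rw [dHyp]
  congr 1
  rw [Real.log_div (by positivity) (by positivity),
    Real.log_div h4.ne' h3.ne', Real.log_div h2.ne' h1.ne',
    Real.log_mul h4.ne' h1.ne', Real.log_mul h3.ne' h2.ne']
  ring

/-- The per-link estimate: a Möbius function of the parameter, bounded on `II` with
nonvanishing denominator, is `2R`-Lipschitz w.r.t. `dHyp`. -/
lemma link_est (P₁ Q₁ P₂ Q₂ R : ℝ) (hR : 0 ≤ R)
    (h : ∀ τ ∈ II, P₂ * τ + Q₂ ≠ 0 ∧ |P₁ * τ + Q₁| ≤ R * |P₂ * τ + Q₂|)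
    {s t : ℝ} (hs : s ∈ II) (ht : t ∈ II) :
    |(P₁ * s + Q₁) / (P₂ * s + Q₂) - (P₁ * t + Q₁) / (P₂ * t + Q₂)|
      ≤ 2 * R * dHyp s t := by
  have hmain : ∀ E : ℝ, 0 < E →
      (P₂ + Q₂) * E + (Q₂ - P₂) ≠ 0 ∧
      |(P₁ + Q₁) * E + (Q₁ - P₁)| ≤ R * |(P₂ + Q₂) * E + (Q₂ - P₂)| := by
    intro E hE
    set τ : ℝ := (E - 1) / (E + 1) with hτdef
    have hE1 : (0:ℝ) < E + 1 := by linarith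
    have hτ : τ ∈ II := by
      constructor
      · rw [lt_div_iff₀ hE1]; linarith
      · rw [div_lt_iff₀ hE1]; linarith
    obtain ⟨hne, hle⟩ := h τ hτ
    have e1 : (P₁ + Q₁) * E + (Q₁ - P₁) = (E + 1) * (P₁ * τ + Q₁) := by
      rw [hτdef]; field_simp; ring
    have e2 : (P₂ + Q₂) * E + (Q₂ - P₂) = (E + 1) * (P₂ * τ + Q₂) := by
      rw [hτdef]; field_simp; ring
    constructor
    · rw [e2]; exact mul_ne_zero hE1.ne' hne
    · rw [e1, e2, abs_mul, abs_mul, abs_of_pos hE1]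
      rw [← mul_assoc, mul_comm R (E+1), mul_assoc]
      exact mul_le_mul_of_nonneg_left hle hE1.le
  have hs1 := one_sub_pos_of_mem hs
  have hs2 := one_add_pos_of_mem hs
  have ht1 := one_sub_pos_of_mem ht
  have ht2 := one_add_pos_of_mem ht
  have hEs : (0:ℝ) < (1 + s) / (1 - s) := by positivity
  have hEt : (0:ℝ) < (1 + t) / (1 - t) := by positivity
  have := key (P₁ + Q₁) (Q₁ - P₁) (P₂ + Q₂) (Q₂ - P₂) R hR hmain hEt hEs
  have es : ∀ u : ℝ, u ∈ II → ((P₁ + Q₁) * ((1 + u) / (1 - u)) + (Q₁ - P₁)) /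
      ((P₂ + Q₂) * ((1 + u) / (1 - u)) + (Q₂ - P₂)) = (P₁ * u + Q₁) / (P₂ * u + Q₂) := by
    intro u hu
    have hu1 := one_sub_pos_of_mem hu
    have e1 : (P₁ + Q₁) * ((1 + u) / (1 - u)) + (Q₁ - P₁) = (2 * (P₁ * u + Q₁)) / (1 - u) := by
      field_simp; ring
    have e2 : (P₂ + Q₂) * ((1 + u) / (1 - u)) + (Q₂ - P₂) = (2 * (P₂ * u + Q₂)) / (1 - u) := by
      field_simp; ring
    rw [e1, e2, div_div_div_cancel_right₀ hu1.ne']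
    exact mul_div_mul_left _ _ two_ne_zero
  rw [es t ht, es s hs] at this
  rw [dHyp_eq_log hs ht]
  rw [abs_sub_comm ((P₁ * s + Q₁) / (P₂ * s + Q₂)) _]
  exact this


section BFormLemmas

variable {p q : ℕ}

lemma bForm_add_right (v w w' : Fin (p + q + 2) → ℝ) :
    bForm p q v (w + w') = bForm p q v w + bForm p q v w' := by
  unfold bForm
  rw [← Finset.sum_add_distrib]
  apply Finset.sum_congr rfl
  intro i _
  simp only [Pi.add_apply]
  split_ifs <;> ring

lemma bForm_smul_right (c : ℝ) (v w : Fin (p + q + 2) → ℝ) :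
    bForm p q v (c • w) = c * bForm p q v w := by
  unfold bForm
  rw [Finset.mul_sum]
  apply Finset.sum_congr rfl
  intro i _
  simp only [Pi.smul_apply, smul_eq_mul]
  split_ifs <;> ring

lemma bForm_smul_left (c : ℝ) (v w : Fin (p + q + 2) → ℝ) :
    bForm p q (c • v) w = c * bForm p q v w := by
  unfold bForm
  rw [Finset.mul_sum]
  apply Finset.sum_congr rfl
  intro i _
  simp only [Pi.smul_apply, smul_eq_mul]
  split_ifs <;> ring

lemma bForm_cont (v₀ : Fin (p + q + 2) → ℝ) :
    Continuous (fun v : Fin (p + q + 2) → ℝ => bForm p q v₀ v) := by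
  unfold bForm
  apply continuous_finset_sum
  intro i _
  exact (continuous_const.mul continuous_const).mul (continuous_apply i)

lemma bForm_cont_diag :
    Continuous (fun v : Fin (p + q + 2) → ℝ => bForm p q v v) := by
  unfold bForm
  apply continuous_finset_sum
  intro i _
  exact (continuous_const.mul (continuous_apply i)).mul (continuous_apply i)

end BFormLemmas

section ProjLemmas

variable {W : Type} [AddCommGroup W] [Module ℝ W] [TopologicalSpace W]

lemma rep_eq_smul {v : W} (hv : v ≠ 0) :
    ∃ c : ℝ, c ≠ 0 ∧ (Projectivization.mk ℝ v hv).rep = c • v := by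
  obtain ⟨a, ha⟩ := exists_smul_eq_mk_rep ℝ v hv
  exact ⟨(a : ℝ), a.ne_zero, by rw [← ha, Units.smul_def]⟩

lemma isQuotientMap_mk :
    IsQuotientMap (fun v : {v : W // v ≠ 0} => Projectivization.mk ℝ v.1 v.2) :=
  isQuotientMap_quotient_mk' (s := projectivizationSetoid ℝ W)

end ProjLemmas

section EinClosed

variable {p q : ℕ}

lemma mk_mem_einSet_iff {v : Fin (p + q + 2) → ℝ} (hv : v ≠ 0) :
    Projectivization.mk ℝ v hv ∈ einSet (bForm p q) ↔ bForm p q v v = 0 := by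
  obtain ⟨c, hc, hrep⟩ := rep_eq_smul hv
  unfold einSet
  rw [Set.mem_setOf_eq, hrep, bForm_smul_left, bForm_smul_right]
  constructor
  · intro h
    have := mul_eq_zero.mp h
    rcases this with h' | h'
    · exact absurd h' hc
    · rcases mul_eq_zero.mp h' with h'' | h''
      · exact absurd h'' hc
      · exact h''
  · intro h; rw [h, mul_zero, mul_zero]

lemma einSet_closed : IsClosed (einSet (bForm p q)) := by
  rw [← isQuotientMap_mk.isClosed_preimage]
  have hpre : (fun v : {v : Fin (p + q + 2) → ℝ // v ≠ 0} =>
      Projectivization.mk ℝ v.1 v.2) ⁻¹' einSet (bForm p q)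
      = Subtype.val ⁻¹' {v : Fin (p + q + 2) → ℝ | bForm p q v v = 0} := by
    ext v
    simp only [Set.mem_preimage, Set.mem_setOf_eq]
    exact mk_mem_einSet_iff v.2
  rw [hpre]
  exact (isClosed_eq bForm_cont_diag continuous_const).preimage continuous_subtype_val

end EinClosed


section Bound

variable {p q : ℕ}

lemma F_scale (v₀ : Fin (p + q + 2) → ℝ) {v : Fin (p + q + 2) → ℝ} (hv : v ≠ 0)
    (j : Fin (p + q + 2)) :
    (Projectivization.mk ℝ v hv).rep j / bForm p q v₀ (Projectivization.mk ℝ v hv).rep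
      = v j / bForm p q v₀ v := by
  obtain ⟨c, hc, hrep⟩ := rep_eq_smul hv
  rw [hrep, bForm_smul_right, Pi.smul_apply, smul_eq_mul, mul_div_mul_left _ _ hc]

lemma sphere_ne_zero (v : Metric.sphere (0 : Fin (p + q + 2) → ℝ) 1) : (v : Fin (p+q+2) → ℝ) ≠ 0 := by
  intro h
  have := mem_sphere_zero_iff_norm.mp v.2
  rw [h] at this
  simp at this

lemma exists_R (Ω : Set (ℙ ℝ (Fin (p + q + 2) → ℝ))) (hΩ : IsProperDomain (bForm p q) Ω)
    {x : ℙ ℝ (Fin (p + q + 2) → ℝ)} (hx : x ∈ Ω) :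
    ∃ (v₀ : Fin (p + q + 2) → ℝ) (R : ℝ), 0 < R ∧
      ∀ y ∈ closure Ω, bForm p q v₀ y.rep ≠ 0 ∧
        ∀ j, |y.rep j| ≤ R * |bForm p q v₀ y.rep| := by
  obtain ⟨⟨hsub, -, -⟩, x₀, hx₀ein, hdisj⟩ := hΩ
  set v₀ := x₀.rep with hv₀
  have hclΩ : closure Ω ⊆ einSet (bForm p q) := closure_minimal hsub einSet_closed
  have hne : ∀ y ∈ closure Ω, bForm p q v₀ y.rep ≠ 0 := by
    intro y hy hz
    exact Set.eq_empty_iff_forall_notMem.mp hdisj y ⟨hy, hclΩ hy, hz⟩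
  -- the sphere map
  set ψ : Metric.sphere (0 : Fin (p + q + 2) → ℝ) 1 → ℙ ℝ (Fin (p + q + 2) → ℝ) :=
    fun v => Projectivization.mk ℝ v.1 (sphere_ne_zero v) with hψ
  have hψcont : Continuous ψ := by
    have h1 : Continuous (fun v : Metric.sphere (0 : Fin (p + q + 2) → ℝ) 1 =>
        (⟨v.1, sphere_ne_zero v⟩ : {v : Fin (p + q + 2) → ℝ // v ≠ 0})) :=
      continuous_subtype_val.subtype_mk _
    exact isQuotientMap_mk.continuous.comp h1
  set K : Set (Metric.sphere (0 : Fin (p + q + 2) → ℝ) 1) := ψ ⁻¹' closure Ω with hK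
  have hKc : IsCompact K := (isClosed_closure.preimage hψcont).isCompact
  -- normalization: any point of closure Ω comes from K
  have hnorm : ∀ y ∈ closure Ω, ∃ u : Metric.sphere (0 : Fin (p + q + 2) → ℝ) 1,
      u ∈ K ∧ y.rep = ‖y.rep‖ • (u : Fin (p + q + 2) → ℝ) := by
    intro y hy
    have hrep := y.rep_nonzero
    have hnrm : ‖y.rep‖ ≠ 0 := norm_ne_zero_iff.mpr hrep
    set u : Fin (p + q + 2) → ℝ := ‖y.rep‖⁻¹ • y.rep with hu
    have hu1 : ‖u‖ = 1 := by
      rw [hu, norm_smul, norm_inv, norm_norm, inv_mul_cancel₀ hnrm]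
    have hune : u ≠ 0 := by
      intro h
      rw [h, norm_zero] at hu1
      simp at hu1
    have husph : u ∈ Metric.sphere (0 : Fin (p + q + 2) → ℝ) 1 :=
      mem_sphere_zero_iff_norm.mpr hu1
    refine ⟨⟨u, husph⟩, ?_, ?_⟩
    · show Projectivization.mk ℝ u _ ∈ closure Ω
      have : Projectivization.mk ℝ u hune = y := by
        conv_rhs => rw [← y.mk_rep]
        rw [Projectivization.mk_eq_mk_iff]
        exact ⟨Units.mk0 (‖y.rep‖⁻¹) (inv_ne_zero hnrm), rfl⟩
      rw [show Projectivization.mk ℝ u (sphere_ne_zero ⟨u, husph⟩) =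
        Projectivization.mk ℝ u hune from rfl, this]
      exact hy
    · show y.rep = ‖y.rep‖ • u
      rw [hu, smul_smul, mul_inv_cancel₀ hnrm, one_smul]
  have hKne : K.Nonempty := by
    obtain ⟨u, hu, -⟩ := hnorm x (subset_closure hx)
    exact ⟨u, hu⟩
  -- minimum of |f| on K
  have hfcont : Continuous (fun v : Metric.sphere (0 : Fin (p + q + 2) → ℝ) 1 =>
      |bForm p q v₀ v.1|) := ((bForm_cont v₀).comp continuous_subtype_val).abs
  obtain ⟨vm, hvm, hmin'⟩ := hKc.exists_isMinOn hKne hfcont.continuousOn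
  have hmin : ∀ u ∈ K, |bForm p q v₀ vm.1| ≤ |bForm p q v₀ u.1| := fun u hu => hmin' hu
  set ε : ℝ := |bForm p q v₀ vm.1| with hε
  have hεpos : 0 < ε := by
    rcases (abs_nonneg (bForm p q v₀ vm.1)).lt_or_eq with h | h
    · exact h
    · exfalso
      have hfz : bForm p q v₀ vm.1 = 0 := abs_eq_zero.mp h.symm
      have hmem : ψ vm ∈ closure Ω := hvm
      have := hne _ hmem
      obtain ⟨c, hc, hrep⟩ := rep_eq_smul (sphere_ne_zero vm)
      apply this
      show bForm p q v₀ (Projectivization.mk ℝ vm.1 (sphere_ne_zero vm)).rep = 0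
      rw [hrep, bForm_smul_right, hfz, mul_zero]
  refine ⟨v₀, 1 / ε, by positivity, ?_⟩
  intro y hy
  refine ⟨hne y hy, ?_⟩
  intro j
  obtain ⟨u, huK, hyu⟩ := hnorm y hy
  have hεu : ε ≤ |bForm p q v₀ u.1| := hmin u huK
  have h1 : |y.rep j| ≤ ‖y.rep‖ := by
    rw [← Real.norm_eq_abs]
    exact norm_le_pi_norm y.rep j
  have h2 : |bForm p q v₀ y.rep| = ‖y.rep‖ * |bForm p q v₀ u.1| := by
    rw [hyu, bForm_smul_right, abs_mul, abs_of_nonneg (norm_nonneg _), norm_smul, norm_norm,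
      mem_sphere_zero_iff_norm.mp u.2, mul_one]
  rw [h2]
  rw [div_mul_eq_mul_div, le_div_iff₀ hεpos, one_mul]
  calc |y.rep j| * ε ≤ ‖y.rep‖ * ε := by
        apply mul_le_mul_of_nonneg_right h1 hεpos.le
  _ ≤ ‖y.rep‖ * |bForm p q v₀ u.1| := by
        apply mul_le_mul_of_nonneg_left hεu (norm_nonneg _)

end Bound


section GeoEst

variable {p q : ℕ}

lemma geo_est (v₀ : Fin (p + q + 2) → ℝ) (Ω : Set (ℙ ℝ (Fin (p + q + 2) → ℝ))) (R : ℝ)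
    (hR : 0 ≤ R)
    (hb : ∀ y ∈ Ω, bForm p q v₀ y.rep ≠ 0 ∧ ∀ j, |y.rep j| ≤ R * |bForm p q v₀ y.rep|)
    {α : ℝ → ℙ ℝ (Fin (p + q + 2) → ℝ)} (hα : IsLightGeodesic (bForm p q) Ω α)
    {s t : ℝ} (hs : s ∈ II) (ht : t ∈ II) (j : Fin (p + q + 2)) :
    |(α s).rep j / bForm p q v₀ (α s).rep - (α t).rep j / bForm p q v₀ (α t).rep|
      ≤ 2 * R * dHyp s t := by
  obtain ⟨u, w, a, b, c, d, hind, h1, h2, h3, hdet, hgeo⟩ := hα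
  set P₁ : ℝ := a * u j + c * w j with hP₁
  set Q₁ : ℝ := b * u j + d * w j with hQ₁
  set P₂ : ℝ := a * bForm p q v₀ u + c * bForm p q v₀ w with hP₂
  set Q₂ : ℝ := b * bForm p q v₀ u + d * bForm p q v₀ w with hQ₂
  have hval : ∀ τ : ℝ, ((a * τ + b) • u + (c * τ + d) • w) j = P₁ * τ + Q₁ := by
    intro τ
    simp only [Pi.add_apply, Pi.smul_apply, smul_eq_mul, hP₁, hQ₁]
    ring
  have hfval : ∀ τ : ℝ, bForm p q v₀ ((a * τ + b) • u + (c * τ + d) • w) = P₂ * τ + Q₂ := by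
    intro τ
    rw [bForm_add_right, bForm_smul_right, bForm_smul_right, hP₂, hQ₂]
    ring
  have hFτ : ∀ τ ∈ II, (α τ).rep j / bForm p q v₀ (α τ).rep = (P₁ * τ + Q₁) / (P₂ * τ + Q₂)
      ∧ (P₂ * τ + Q₂ ≠ 0) ∧ |P₁ * τ + Q₁| ≤ R * |P₂ * τ + Q₂| := by
    intro τ hτ
    obtain ⟨hvne, hmk, hmem⟩ := hgeo τ hτ
    obtain ⟨hfne, hcoord⟩ := hb _ hmem
    obtain ⟨cτ, hcτ, hrepτ⟩ := rep_eq_smul hvne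
    have hrepα : (α τ).rep = cτ • ((a * τ + b) • u + (c * τ + d) • w) := by
      rw [hmk]; exact hrepτ
    have hfne2 : cτ * bForm p q v₀ ((a * τ + b) • u + (c * τ + d) • w) ≠ 0 := by
      rw [← bForm_smul_right, ← hrepα]; exact hfne
    have hfv : bForm p q v₀ ((a * τ + b) • u + (c * τ + d) • w) ≠ 0 :=
      fun hz => hfne2 (by rw [hz, mul_zero])
    refine ⟨?_, ?_, ?_⟩
    · rw [hmk, F_scale v₀ hvne j, hval, hfval]
    · rw [← hfval τ]; exact hfv
    · have hc := hcoord j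
      rw [hrepα, Pi.smul_apply, smul_eq_mul, bForm_smul_right, abs_mul, abs_mul] at hc
      rw [← hval τ, ← hfval τ]
      have hcpos : 0 < |cτ| := abs_pos.mpr hcτ
      rw [show R * (|cτ| * |bForm p q v₀ ((a * τ + b) • u + (c * τ + d) • w)|)
        = |cτ| * (R * |bForm p q v₀ ((a * τ + b) • u + (c * τ + d) • w)|) by ring] at hc
      exact le_of_mul_le_mul_left hc hcpos
  rw [(hFτ s hs).1, (hFτ t ht).1]
  exact link_est P₁ Q₁ P₂ Q₂ R hR (fun τ hτ => ⟨(hFτ τ hτ).2.1, (hFτ τ hτ).2.2⟩) hs ht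

end GeoEst

/-- Telescoping estimate. -/
lemma telescope : ∀ (N : ℕ) (G : Fin (N + 1) → ℝ),
    |G 0 - G (Fin.last N)| ≤ ∑ i : Fin N, |G i.castSucc - G i.succ| := by
  intro N
  induction N with
  | zero =>
    intro G
    simp [Fin.last]
  | succ N ih =>
    intro G
    rw [Fin.sum_univ_castSucc (f := fun i : Fin (N + 1) => |G i.castSucc - G i.succ|)]
    have h1 := ih (fun i => G i.castSucc)
    simp only [Fin.castSucc_zero, Fin.succ_castSucc] at h1
    have h2 : |G 0 - G (Fin.last (N + 1))| ≤
        |G 0 - G (Fin.last N).castSucc| + |G (Fin.last N).castSucc - G (Fin.last (N + 1))| :=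
      abs_sub_le _ _ _
    have h3 : (Fin.last N).succ = Fin.last (N + 1) := Fin.succ_last N
    rw [← h3] at h2 ⊢
    simp only [Fin.succ_castSucc]
    linarith [h1, h2]


section ChainEst

variable {p q : ℕ}

lemma chain_est (v₀ : Fin (p + q + 2) → ℝ) (Ω : Set (ℙ ℝ (Fin (p + q + 2) → ℝ))) (R : ℝ)
    (hR : 0 ≤ R)
    (hb : ∀ y ∈ Ω, bForm p q v₀ y.rep ≠ 0 ∧ ∀ j, |y.rep j| ≤ R * |bForm p q v₀ y.rep|)
    {x y : ℙ ℝ (Fin (p + q + 2) → ℝ)} {N : ℕ} {cst : ℝ}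
    (hch : IsChainCost (bForm p q) Ω x y N cst) (j : Fin (p + q + 2)) :
    |x.rep j / bForm p q v₀ x.rep - y.rep j / bForm p q v₀ y.rep| ≤ 2 * R * cst := by
  obtain ⟨xs, αs, ss, ts, hx0, hxN, hlink, hcost⟩ := hch
  set F : ℙ ℝ (Fin (p + q + 2) → ℝ) → ℝ := fun z => z.rep j / bForm p q v₀ z.rep with hF
  have hstep : ∀ i : Fin N, |F (xs i.castSucc) - F (xs i.succ)| ≤ 2 * R * dHyp (ss i) (ts i) := by
    intro i
    obtain ⟨hgeo, hsi, hti, hα1, hα2⟩ := hlink i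
    rw [← hα1, ← hα2]
    exact geo_est v₀ Ω R hR hb hgeo hsi hti j
  have htel := telescope N (fun i => F (xs i))
  calc |F x - F y| = |F (xs 0) - F (xs (Fin.last N))| := by rw [hx0, hxN]
    _ ≤ ∑ i : Fin N, |F (xs i.castSucc) - F (xs i.succ)| := htel
    _ ≤ ∑ i : Fin N, 2 * R * dHyp (ss i) (ts i) := Finset.sum_le_sum (fun i _ => hstep i)
    _ = 2 * R * cst := by rw [hcost, Finset.mul_sum]

lemma cost_nonneg {Ω : Set (ℙ ℝ (Fin (p + q + 2) → ℝ))} {x y : ℙ ℝ (Fin (p + q + 2) → ℝ)}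
    {N : ℕ} {cst : ℝ} (hch : IsChainCost (bForm p q) Ω x y N cst) : 0 ≤ cst := by
  obtain ⟨xs, αs, ss, ts, hx0, hxN, hlink, hcost⟩ := hch
  rw [hcost]
  apply Finset.sum_nonneg
  intro i _
  exact abs_nonneg _

end ChainEst


/-- Proper domains of `Ein^{p,q}` are Markowitz-hyperbolic. -/
theorem stmt_5 (p q : ℕ) (hp : 1 ≤ p) (hq : 1 ≤ q)
    (Ω : Set (ℙ ℝ (Fin (p + q + 2) → ℝ)))
    (hΩ : IsProperDomain (bForm p q) Ω) :
    ∀ x ∈ Ω, ∀ y ∈ Ω, markowitz (bForm p q) Ω x y = 0 → x = y := by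
  intro x hx y hy h0
  obtain ⟨v₀, R, hRpos, hbound⟩ := exists_R Ω hΩ hx
  have hb : ∀ z ∈ Ω, bForm p q v₀ z.rep ≠ 0 ∧
      ∀ j, |z.rep j| ≤ R * |bForm p q v₀ z.rep| := fun z hz => hbound z (subset_closure hz)
  have hfx : bForm p q v₀ x.rep ≠ 0 := (hbound x (subset_closure hx)).1
  have hfy : bForm p q v₀ y.rep ≠ 0 := (hbound y (subset_closure hy)).1
  have hFeq : ∀ j, x.rep j / bForm p q v₀ x.rep = y.rep j / bForm p q v₀ y.rep := by
    intro j
    by_contra hne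
    set D : ℝ := |x.rep j / bForm p q v₀ x.rep - y.rep j / bForm p q v₀ y.rep| with hD
    have hDpos : 0 < D := abs_pos.mpr (sub_ne_zero.mpr hne)
    have hεpos : (0 : ℝ) < D / (4 * R) := by positivity
    have hlt : markowitz (bForm p q) Ω x y < ENNReal.ofReal (D / (4 * R)) := by
      rw [h0]
      exact ENNReal.ofReal_pos.mpr hεpos
    unfold markowitz at hlt
    obtain ⟨e, he, helt⟩ := sInf_lt_iff.mp hlt
    obtain ⟨N, cst, hN1, hch, hee⟩ := he
    have hcst0 : 0 ≤ cst := cost_nonneg hch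
    rw [hee] at helt
    have hclt : cst < D / (4 * R) := (ENNReal.ofReal_lt_ofReal_iff hεpos).mp helt
    have hchain := chain_est v₀ Ω R hRpos.le hb hch j
    rw [← hD] at hchain
    have h4 : 2 * R * cst < 2 * R * (D / (4 * R)) := by
      apply mul_lt_mul_of_pos_left hclt (by positivity)
    have h5 : 2 * R * (D / (4 * R)) = D / 2 := by
      field_simp
      ring
    nlinarith
  have hvec : x.rep = (bForm p q v₀ x.rep / bForm p q v₀ y.rep) • y.rep := by
    funext j
    have h := hFeq j
    rw [div_eq_div_iff hfx hfy] at h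
    rw [Pi.smul_apply, smul_eq_mul, div_mul_eq_mul_div, eq_div_iff hfy]
    linarith
  have hcne : bForm p q v₀ x.rep / bForm p q v₀ y.rep ≠ 0 := div_ne_zero hfx hfy
  calc x = Projectivization.mk ℝ x.rep x.rep_nonzero := x.mk_rep.symm
    _ = Projectivization.mk ℝ y.rep y.rep_nonzero := by
        rw [Projectivization.mk_eq_mk_iff]
        refine ⟨Units.mk0 _ hcne, ?_⟩
        rw [Units.smul_def]
        exact hvec.symm
    _ = y := y.mk_rep
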